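/- arXiv:2007.01742 — 5 statements merged into one kernel-verified Lean document; each statement's English description precedes it below -/
import Mathlib

section
/- Let u : ℝ → ℝ^m and f : ℝ^m → ℝ^ℓ, let x ∈ ℝ, and suppose there exists a sequence (h_j) of nonzero real numbers converging to 0 such that (u(x+h_j) − u(x))/h_j converges to some L ∈ ℝ^m and (f(u(x+h_j)) − f(u(x)))/h_j converges to some M ∈ ℝ^ℓ. If Λ := limsup_{y → u(x)} |y − u(x)|/|f(y) − f(u(x))| is finite, then |L| ≤ Λ·|M|. -/
open Filter Topology
open scoped ENNReal NNReal

/-- pointwise core of the reverse chain-rule estimate. If a sequence of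
difference quotients of `u` at `x` converges to `L` and the corresponding difference
quotients of `f ∘ u` converge to `M`, and the limsup factor
`Λ = limsup_{y → u x} |y - u x| / |f y - f (u x)|` is finite, then `‖L‖ ≤ Λ ‖M‖`. -/
theorem stmt_0 (m l : ℕ)
    (u : ℝ → EuclideanSpace ℝ (Fin m))
    (f : EuclideanSpace ℝ (Fin m) → EuclideanSpace ℝ (Fin l))
    (x : ℝ) (h : ℕ → ℝ)
    (hne : ∀ j, h j ≠ 0)
    (hto0 : Tendsto h atTop (𝓝 0))
    (L : EuclideanSpace ℝ (Fin m)) (M : EuclideanSpace ℝ (Fin l))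
    (hL : Tendsto (fun j => (h j)⁻¹ • (u (x + h j) - u x)) atTop (𝓝 L))
    (hM : Tendsto (fun j => (h j)⁻¹ • (f (u (x + h j)) - f (u x))) atTop (𝓝 M))
    (Λ : ℝ≥0∞)
    (hΛdef : Λ = Filter.limsup
      (fun y => (‖y - u x‖₊ : ℝ≥0∞) / (‖f y - f (u x)‖₊ : ℝ≥0∞)) (𝓝[≠] (u x)))
    (hΛ : Λ ≠ ⊤) :
    ‖L‖ ≤ Λ.toReal * ‖M‖ := by
  by_cases hev : ∀ᶠ j in atTop, u (x + h j) ≠ u x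
  · -- main case
    set y : ℕ → EuclideanSpace ℝ (Fin m) := fun j => u (x + h j) with hy
    have hy0 : Tendsto (fun j => y j - u x) atTop (𝓝 0) := by
      have h1 : Tendsto (fun j => h j • ((h j)⁻¹ • (y j - u x))) atTop (𝓝 ((0:ℝ) • L)) :=
        hto0.smul hL
      rw [zero_smul] at h1
      refine h1.congr fun j => ?_
      rw [smul_smul, mul_inv_cancel₀ (hne j), one_smul]
    have hyux : Tendsto y atTop (𝓝[≠] (u x)) := by
      apply tendsto_nhdsWithin_of_tendsto_nhds_of_eventually_within
      · exact tendsto_sub_nhds_zero_iff.mp hy0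
      · simpa using hev
    set g : EuclideanSpace ℝ (Fin m) → ℝ≥0∞ :=
      fun z => (‖z - u x‖₊ : ℝ≥0∞) / (‖f z - f (u x)‖₊ : ℝ≥0∞) with hg
    have hls : limsup (fun j => g (y j)) atTop ≤ Λ := by
      rw [hΛdef]
      exact (Filter.limsup_comp g y atTop).le.trans (limsup_le_limsup_of_le hyux)
    refine le_of_forall_pos_le_add fun ε hε => ?_
    set δ : ℝ := ε / (‖M‖ + 1) with hδ
    have hδ0 : 0 < δ := div_pos hε (by positivity)
    set c : ℝ≥0∞ := Λ + ENNReal.ofReal δ with hc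
    have hclt : Λ < c := ENNReal.lt_add_right hΛ (ENNReal.ofReal_pos.mpr hδ0).ne'
    have hct : c ≠ ⊤ := ENNReal.add_ne_top.mpr ⟨hΛ, ENNReal.ofReal_ne_top⟩
    have hev2 : ∀ᶠ j in atTop, g (y j) < c :=
      Filter.eventually_lt_of_limsup_lt (lt_of_le_of_lt hls hclt)
    have hineq : ∀ᶠ j in atTop,
        ‖(h j)⁻¹ • (y j - u x)‖ ≤ c.toReal * ‖(h j)⁻¹ • (f (y j) - f (u x))‖ := by
      filter_upwards [hev2] with j hj
      have h1 : (‖y j - u x‖₊ : ℝ≥0∞) ≤ c * (‖f (y j) - f (u x)‖₊ : ℝ≥0∞) :=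
        (ENNReal.div_le_iff_le_mul (Or.inr hct) (Or.inl ENNReal.coe_ne_top)).mp hj.le
      have h2 : ‖y j - u x‖ ≤ c.toReal * ‖f (y j) - f (u x)‖ := by
        have h3 := ENNReal.toReal_mono (ENNReal.mul_ne_top hct ENNReal.coe_ne_top) h1
        simpa [ENNReal.toReal_mul] using h3
      rw [norm_smul, norm_smul, norm_inv, Real.norm_eq_abs]
      calc |h j|⁻¹ * ‖y j - u x‖ ≤ |h j|⁻¹ * (c.toReal * ‖f (y j) - f (u x)‖) :=
            mul_le_mul_of_nonneg_left h2 (by positivity)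
        _ = c.toReal * (|h j|⁻¹ * ‖f (y j) - f (u x)‖) := by ring
    have hLle : ‖L‖ ≤ c.toReal * ‖M‖ :=
      le_of_tendsto_of_tendsto hL.norm (hM.norm.const_mul c.toReal) hineq
    have hcto : c.toReal = Λ.toReal + δ := by
      rw [hc, ENNReal.toReal_add hΛ ENNReal.ofReal_ne_top, ENNReal.toReal_ofReal hδ0.le]
    rw [hcto] at hLle
    calc ‖L‖ ≤ (Λ.toReal + δ) * ‖M‖ := hLle
      _ = Λ.toReal * ‖M‖ + δ * ‖M‖ := by ring
      _ ≤ Λ.toReal * ‖M‖ + ε := by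
          have : δ * ‖M‖ ≤ δ * (‖M‖ + 1) :=
            mul_le_mul_of_nonneg_left (by linarith [norm_nonneg M]) hδ0.le
          have heq : δ * (‖M‖ + 1) = ε := by
            rw [hδ]; field_simp
          linarith
  · -- degenerate case: frequently u (x + h j) = u x, so L = 0
    have hfreq : ∃ᶠ j in atTop, u (x + h j) = u x := by
      exact (Filter.not_eventually.mp hev).mono fun j hj => not_not.mp hj
    have hfreq0 : ∃ᶠ j in atTop,
        (h j)⁻¹ • (u (x + h j) - u x) ∈ ({0} : Set (EuclideanSpace ℝ (Fin m))) :=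
      hfreq.mono fun j hj => by simp [hj]
    have hcl : L ∈ closure ({0} : Set (EuclideanSpace ℝ (Fin m))) :=
      mem_closure_of_frequently_of_tendsto hfreq0 hL
    have hL0 : L = 0 := by simpa using hcl
    rw [hL0, norm_zero]
    positivity
end

section
/- Let u : ℝ^n → ℝ^m and f : ℝ^m → ℝ^ℓ, and let x ∈ ℝ^n. Suppose u is (Fréchet) differentiable at x with derivative Du(x) and the composition f ∘ u is (Fréchet) differentiable at x with derivative D(f∘u)(x). If Λ := limsup_{y → u(x)} |y − u(x)|/|f(y) − f(u(x))| is finite, then for every h ∈ ℝ^n one has |Du(x)[h]| ≤ Λ·|D(f∘u)(x)[h]|. -/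
open Filter Topology
open scoped ENNReal NNReal

/-! For every finite `c > Λ`, the increments satisfy `‖y - u x‖ ≤ c ‖f y - f (u x)‖` for `y` near
`u x` (trivially at `y = u x` itself). Restricted to the line `t ↦ x + t • h` this bounds the
difference quotients of `u` by `c` times those of `f ∘ u`; letting `t → 0` and then `c ↓ Λ` gives
the estimate. -/

section IncrementBound

variable {𝕜 : Type*} [NontriviallyNormedField 𝕜]
  {E F G : Type*} [NormedAddCommGroup E] [NormedSpace 𝕜 E]
  [NormedAddCommGroup F] [NormedSpace 𝕜 F] [NormedAddCommGroup G] [NormedSpace 𝕜 G]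

theorem norm_le_mul_norm_of_hasDerivAt_of_eventually_le {g : 𝕜 → F} {k : 𝕜 → G} {g' : F}
    {k' : G} {t₀ : 𝕜} {c : ℝ} (hg : HasDerivAt g g' t₀) (hk : HasDerivAt k k' t₀)
    (hbound : ∀ᶠ t in 𝓝 t₀, ‖g t - g t₀‖ ≤ c * ‖k t - k t₀‖) :
    ‖g'‖ ≤ c * ‖k'‖ := by
  have hslope : ∀ᶠ t in 𝓝[≠] t₀, ‖slope g t₀ t‖ ≤ c * ‖slope k t₀ t‖ := by
    filter_upwards [nhdsWithin_le_nhds hbound] with t ht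
    simp only [slope_def_module, norm_smul]
    calc ‖(t - t₀)⁻¹‖ * ‖g t - g t₀‖ ≤ ‖(t - t₀)⁻¹‖ * (c * ‖k t - k t₀‖) := by gcongr
      _ = c * (‖(t - t₀)⁻¹‖ * ‖k t - k t₀‖) := by ring
  exact le_of_tendsto_of_tendsto (hasDerivAt_iff_tendsto_slope.mp hg).norm
    ((hasDerivAt_iff_tendsto_slope.mp hk).norm.const_mul c) hslope

theorem norm_le_mul_norm_of_hasFDerivAt_of_eventually_le {u : E → F} {k : E → G}
    {Du : E →L[𝕜] F} {Dk : E →L[𝕜] G} {x : E} {c : ℝ} (hu : HasFDerivAt u Du x)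
    (hk : HasFDerivAt k Dk x) (hbound : ∀ᶠ y in 𝓝 x, ‖u y - u x‖ ≤ c * ‖k y - k x‖) (h : E) :
    ‖Du h‖ ≤ c * ‖Dk h‖ := by
  have hline : HasDerivAt (fun t : 𝕜 => x + t • h) h 0 := by
    simpa using ((hasDerivAt_id (0 : 𝕜)).smul_const h).const_add x
  have hx : x + (0 : 𝕜) • h = x := by simp
  rw [← hx] at hu hk hbound
  refine norm_le_mul_norm_of_hasDerivAt_of_eventually_le (hu.comp_hasDerivAt 0 hline)
    (hk.comp_hasDerivAt 0 hline) ?_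
  exact hline.continuousAt.tendsto.eventually hbound

end IncrementBound

theorem eventually_norm_sub_le_of_limsup_lt {F G : Type*} [SeminormedAddCommGroup F]
    [SeminormedAddCommGroup G] {f : F → G} {a : F} {c : ℝ≥0}
    (hc : limsup (fun y => (‖y - a‖₊ : ℝ≥0∞) / ‖f y - f a‖₊) (𝓝[≠] a) < c) :
    ∀ᶠ y in 𝓝 a, ‖y - a‖ ≤ c * ‖f y - f a‖ := by
  rw [← nhdsNE_sup_pure, eventually_sup, eventually_pure]
  refine ⟨?_, by simp⟩
  filter_upwards [eventually_lt_of_limsup_lt hc] with y hy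
  have hle := (ENNReal.div_le_iff_le_mul (Or.inr ENNReal.coe_ne_top)
    (Or.inl ENNReal.coe_ne_top)).mp hy.le
  exact_mod_cast hle

theorem le_toReal_mul_of_forall_lt {Λ : ℝ≥0∞} (hΛ : Λ ≠ ⊤) {a b : ℝ}
    (h : ∀ c : ℝ≥0, Λ < c → a ≤ c * b) : a ≤ Λ.toReal * b := by
  lift Λ to ℝ≥0 using hΛ
  have hlim : Tendsto (fun c : ℝ≥0 => (c : ℝ) * b) (𝓝[>] Λ) (𝓝 (Λ * b)) :=
    ((NNReal.continuous_coe.mul continuous_const).tendsto Λ).mono_left nhdsWithin_le_nhds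
  exact ge_of_tendsto hlim (eventually_nhdsWithin_of_forall fun c hc => h c (by exact_mod_cast hc))

/-- pointwise reverse superposition estimate. If `u` is Fréchet differentiable
at `x`, `f ∘ u` is Fréchet differentiable at `x`, and the limsup factor
`Λ = limsup_{y → u x} |y - u x| / |f y - f (u x)|` is finite, then for every `h`,
`|Du(x)[h]| ≤ Λ · |D(f∘u)(x)[h]|`. -/
theorem stmt_1 (n m l : ℕ)
    (u : EuclideanSpace ℝ (Fin n) → EuclideanSpace ℝ (Fin m))
    (f : EuclideanSpace ℝ (Fin m) → EuclideanSpace ℝ (Fin l))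
    (x : EuclideanSpace ℝ (Fin n))
    (Du : EuclideanSpace ℝ (Fin n) →L[ℝ] EuclideanSpace ℝ (Fin m))
    (Dfu : EuclideanSpace ℝ (Fin n) →L[ℝ] EuclideanSpace ℝ (Fin l))
    (hu : HasFDerivAt u Du x)
    (hfu : HasFDerivAt (f ∘ u) Dfu x)
    (Λ : ℝ≥0∞)
    (hΛdef : Λ = Filter.limsup
      (fun y => (‖y - u x‖₊ : ℝ≥0∞) / (‖f y - f (u x)‖₊ : ℝ≥0∞)) (𝓝[≠] (u x)))
    (hΛ : Λ ≠ ⊤) :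
    ∀ h : EuclideanSpace ℝ (Fin n), ‖Du h‖ ≤ Λ.toReal * ‖Dfu h‖ := by
  intro h
  refine le_toReal_mul_of_forall_lt hΛ fun c hc => ?_
  have hbound := eventually_norm_sub_le_of_limsup_lt (hΛdef ▸ hc)
  exact norm_le_mul_norm_of_hasFDerivAt_of_eventually_le hu hfu
    (hu.continuousAt.tendsto.eventually hbound) h
end

section
/- Let 0 < σ < 1 and 1 ≤ p < ∞ satisfy σp > 1. There exists a constant C (depending only on σ and p) such that for every measurable function v : [0,1] → ℝ^m one has (esssup_{t,r ∈ [0,1]} |v(t) − v(r)|)^p ≤ C · ∬_{[0,1]×[0,1]} |v(t) − v(r)|^p / |t − r|^{1+σp} dt dr. -/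
/-!
For `t ∈ [0,1]` let `A n t` be the mean of `‖v t - v s‖` over an interval `Jₙ(t) ⊆ [0,1]` of
length `2⁻ⁿ` containing `t`. The triangle inequality through a third point gives
`A n t ≤ A (n+1) t + ⨍_{Jₙ} ⨍_{Jₙ₊₁} ‖v s - v u‖`, and Jensen together with `|s - u| ≤ 2¹⁻ⁿ`
bounds the last mean by `2^((2 + σp)/p) (2^(1/p - σ))ⁿ I^(1/p)`, where `I` is the Gagliardo
integral: a geometric sequence because `σp > 1`. The same estimate on a single interval gives
`A n t ≤ 2^(-nσ) G(t)^(1/p)` with `G(t) = ∫₀¹ ‖v t - v r‖ᵖ / |t - r|^(1+σp) dr`, which is finite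
for a.e. `t`; so `A n t → 0` without any use of Lebesgue points, and telescoping bounds
`A 0 t = ∫₀¹ ‖v t - v s‖ ds` by a multiple of `I^(1/p)` for a.e. `t`. Finally
`‖v t - v r‖ ≤ A 0 t + A 0 r`.
-/

open MeasureTheory Set Filter Topology ProbabilityTheory
open scoped ENNReal

lemma lintegral_le_lintegral_rpow_rpow_one_div {α : Type*} [MeasurableSpace α] {μ : Measure α}
    [IsProbabilityMeasure μ] {f : α → ℝ≥0∞} {p : ℝ} (hp : 1 ≤ p) (hf : AEMeasurable f μ) :
    ∫⁻ x, f x ∂μ ≤ (∫⁻ x, f x ^ p ∂μ) ^ (1 / p) := by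
  simpa [eLpNorm', enorm_eq_self] using
    eLpNorm'_le_eLpNorm'_of_exponent_le one_pos hp μ hf.aestronglyMeasurable

lemma ENNReal.le_tsum_of_le_add_of_tendsto_zero {E T : ℕ → ℝ≥0∞}
    (h : ∀ k, E k ≤ E (k + 1) + T k) (hE : Tendsto E atTop (𝓝 0)) : E 0 ≤ ∑' k, T k := by
  have telescope : ∀ n, E 0 ≤ E n + ∑ k ∈ Finset.range n, T k := by
    intro n
    induction n with
    | zero => simp
    | succ n ih =>
      calc E 0 ≤ E (n + 1) + T n + ∑ k ∈ Finset.range n, T k := ih.trans (by gcongr; exact h n)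
        _ = E (n + 1) + ∑ k ∈ Finset.range (n + 1), T k := by rw [Finset.sum_range_succ]; ring
  have hle : ∀ n, E 0 ≤ E n + ∑' k, T k :=
    fun n => (telescope n).trans (by gcongr; exact ENNReal.sum_le_tsum _)
  simpa using ge_of_tendsto' (hE.add_const _) hle

lemma ENNReal.two_rpow_mul_two_rpow (x y : ℝ) : (2 : ℝ≥0∞) ^ x * 2 ^ y = 2 ^ (x + y) :=
  (ENNReal.rpow_add x y two_ne_zero ENNReal.ofNat_ne_top).symm

section Averages

variable {α E : Type*} [MeasurableSpace α] [NormedAddCommGroup E] [MeasurableSpace E]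
  [BorelSpace E] {v : α → E}

lemma enorm_sub_le_lintegral_add (ν : Measure α) [IsProbabilityMeasure ν] (hv : Measurable v)
    (x y : E) : ‖x - y‖ₑ ≤ ∫⁻ u, ‖x - v u‖ₑ ∂ν + ∫⁻ u, ‖y - v u‖ₑ ∂ν := by
  rw [← lintegral_add_left (hv.const_sub x).enorm]
  calc ‖x - y‖ₑ = ∫⁻ _, ‖x - y‖ₑ ∂ν := by simp
    _ ≤ _ := lintegral_mono fun u => by
      simpa only [edist_eq_enorm_sub] using edist_triangle_right x y (v u)

lemma lintegral_enorm_sub_le_add_lintegral_lintegral (ν₁ ν₂ : Measure α)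
    [IsProbabilityMeasure ν₁] [IsProbabilityMeasure ν₂] (hv : Measurable v) (x : E) :
    ∫⁻ s, ‖x - v s‖ₑ ∂ν₁ ≤ ∫⁻ u, ‖x - v u‖ₑ ∂ν₂ + ∫⁻ s, ∫⁻ u, ‖v s - v u‖ₑ ∂ν₂ ∂ν₁ :=
  calc ∫⁻ s, ‖x - v s‖ₑ ∂ν₁
      ≤ ∫⁻ s, (∫⁻ u, ‖x - v u‖ₑ ∂ν₂ + ∫⁻ u, ‖v s - v u‖ₑ ∂ν₂) ∂ν₁ :=
        lintegral_mono fun s => enorm_sub_le_lintegral_add ν₂ hv x (v s)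
    _ = _ := by simp [lintegral_add_left measurable_const]

end Averages

section Kernel

variable {α E : Type*} [MetricSpace α] [NormedAddCommGroup E]

noncomputable def gagliardoKernel (v : α → E) (σ p : ℝ) (t r : α) : ℝ≥0∞ :=
  ‖v t - v r‖ₑ ^ p / edist t r ^ (1 + σ * p)

variable {v : α → E} {σ p : ℝ}

lemma rpow_enorm_sub_le_mul_gagliardoKernel (hp : 0 < p) (hσp : 0 ≤ 1 + σ * p) {t r : α}
    {δ : ℝ≥0∞} (h : edist t r ≤ δ) :
    ‖v t - v r‖ₑ ^ p ≤ δ ^ (1 + σ * p) * gagliardoKernel v σ p t r := by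
  rcases eq_or_ne t r with rfl | htr
  · simp [ENNReal.zero_rpow_of_pos hp]
  have hd0 : edist t r ^ (1 + σ * p) ≠ 0 := by
    simp [ENNReal.rpow_eq_zero_iff, htr, edist_ne_top]
  have hdtop : edist t r ^ (1 + σ * p) ≠ ∞ := ENNReal.rpow_ne_top_of_nonneg hσp (edist_ne_top _ _)
  calc ‖v t - v r‖ₑ ^ p = edist t r ^ (1 + σ * p) * gagliardoKernel v σ p t r :=
        (ENNReal.mul_div_cancel hd0 hdtop).symm
    _ ≤ δ ^ (1 + σ * p) * gagliardoKernel v σ p t r := by gcongr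

variable [MeasurableSpace α]

lemma lintegral_rpow_enorm_sub_le (hp : 0 < p) (hσp : 0 ≤ 1 + σ * p) {ν : Measure α} {t : α}
    {δ : ℝ≥0∞} (hδ : δ ≠ ∞) (htδ : ∀ᵐ s ∂ν, edist t s ≤ δ) :
    ∫⁻ s, ‖v t - v s‖ₑ ^ p ∂ν ≤ δ ^ (1 + σ * p) * ∫⁻ s, gagliardoKernel v σ p t s ∂ν := by
  rw [← lintegral_const_mul' _ _ (ENNReal.rpow_ne_top_of_nonneg hσp hδ)]
  exact lintegral_mono_ae (htδ.mono fun s hs => rpow_enorm_sub_le_mul_gagliardoKernel hp hσp hs)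

variable [MeasurableSpace E] [BorelSpace E]

lemma lintegral_enorm_sub_le (hp : 1 ≤ p) (hσp : 0 ≤ 1 + σ * p) (hv : Measurable v)
    {ν : Measure α} [IsProbabilityMeasure ν] {t : α} {δ : ℝ≥0∞} (hδ : δ ≠ ∞)
    (htδ : ∀ᵐ s ∂ν, edist t s ≤ δ) :
    ∫⁻ s, ‖v t - v s‖ₑ ∂ν ≤ (δ ^ (1 + σ * p) * ∫⁻ s, gagliardoKernel v σ p t s ∂ν) ^ (1 / p) :=
  (lintegral_le_lintegral_rpow_rpow_one_div hp (hv.const_sub _).enorm.aemeasurable).trans <|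
    ENNReal.rpow_le_rpow (lintegral_rpow_enorm_sub_le (by linarith) hσp hδ htδ) (by positivity)

lemma lintegral_lintegral_enorm_sub_le [SecondCountableTopology E] (hp : 1 ≤ p)
    (hσp : 0 ≤ 1 + σ * p) (hv : Measurable v) {ν₁ ν₂ : Measure α} [IsProbabilityMeasure ν₁]
    [IsProbabilityMeasure ν₂] {δ : ℝ≥0∞} (hδ : δ ≠ ∞)
    (hδ₁₂ : ∀ᵐ s ∂ν₁, ∀ᵐ u ∂ν₂, edist s u ≤ δ) :
    ∫⁻ s, ∫⁻ u, ‖v s - v u‖ₑ ∂ν₂ ∂ν₁ ≤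
      (δ ^ (1 + σ * p) * ∫⁻ s, ∫⁻ u, gagliardoKernel v σ p s u ∂ν₂ ∂ν₁) ^ (1 / p) := by
  have hp0 : 0 < p := by linarith
  have hmeas : Measurable fun s => (∫⁻ u, ‖v s - v u‖ₑ ^ p ∂ν₂) ^ (1 / p) :=
    (((hv.comp measurable_fst).sub (hv.comp measurable_snd)).enorm.pow_const p
      |>.lintegral_prod_right').pow_const _
  calc ∫⁻ s, ∫⁻ u, ‖v s - v u‖ₑ ∂ν₂ ∂ν₁
      ≤ ∫⁻ s, (∫⁻ u, ‖v s - v u‖ₑ ^ p ∂ν₂) ^ (1 / p) ∂ν₁ := lintegral_mono fun s =>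
        lintegral_le_lintegral_rpow_rpow_one_div hp (hv.const_sub _).enorm.aemeasurable
    _ ≤ (∫⁻ s, ∫⁻ u, ‖v s - v u‖ₑ ^ p ∂ν₂ ∂ν₁) ^ (1 / p) := by
        simpa only [← ENNReal.rpow_mul, one_div_mul_cancel hp0.ne', ENNReal.rpow_one] using
          lintegral_le_lintegral_rpow_rpow_one_div hp hmeas.aemeasurable
    _ ≤ (∫⁻ s, δ ^ (1 + σ * p) * ∫⁻ u, gagliardoKernel v σ p s u ∂ν₂ ∂ν₁) ^ (1 / p) := by
        gcongr ?_ ^ _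
        exact lintegral_mono_ae (hδ₁₂.mono fun s hs => lintegral_rpow_enorm_sub_le hp0 hσp hδ hs)
    _ = _ := by rw [lintegral_const_mul' _ _ (ENNReal.rpow_ne_top_of_nonneg hσp hδ)]

end Kernel

def window (ℓ t : ℝ) : Set ℝ := Icc (min t (1 - ℓ)) (min t (1 - ℓ) + ℓ)

lemma measurableSet_window (ℓ t : ℝ) : MeasurableSet (window ℓ t) := measurableSet_Icc

lemma volume_window (ℓ t : ℝ) : volume (window ℓ t) = ENNReal.ofReal ℓ := by
  rw [window, Real.volume_Icc, add_sub_cancel_left]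

lemma window_subset_Icc {ℓ t : ℝ} (hℓ : ℓ ≤ 1) (ht : t ∈ Icc (0 : ℝ) 1) :
    window ℓ t ⊆ Icc 0 1 :=
  Icc_subset_Icc (le_min ht.1 (by linarith)) (by linarith [min_le_right t (1 - ℓ)])

lemma edist_le_of_mem_window {ℓ t s : ℝ} (hℓ : 0 ≤ ℓ) (ht : t ≤ 1) (hs : s ∈ window ℓ t) :
    edist t s ≤ ENNReal.ofReal ℓ := by
  rw [edist_le_ofReal hℓ, Real.dist_eq, abs_le]
  have : t ≤ min t (1 - ℓ) + ℓ := by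
    rw [← min_add_add_right]; exact le_min (by linarith) (by linarith)
  constructor <;> linarith [hs.1, hs.2, min_le_left t (1 - ℓ)]

lemma window_one {t : ℝ} (ht : 0 ≤ t) : window 1 t = Icc 0 1 := by
  rw [window, sub_self, min_eq_right ht, zero_add]

def dyadicWindow (n : ℕ) (t : ℝ) : Set ℝ := window (2 ^ (-(n : ℝ))) t

lemma volume_dyadicWindow (n : ℕ) (t : ℝ) : volume (dyadicWindow n t) = 2 ^ (-(n : ℝ)) := by
  rw [dyadicWindow, volume_window, ← ENNReal.ofReal_rpow_of_pos two_pos, ENNReal.ofReal_ofNat]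

instance (n : ℕ) (t : ℝ) : IsProbabilityMeasure (volume[|dyadicWindow n t]) :=
  cond_isProbabilityMeasure_of_finite (by simp [volume_dyadicWindow])
    (by simp [volume_dyadicWindow])

lemma lintegral_cond_dyadicWindow (n : ℕ) (t : ℝ) (f : ℝ → ℝ≥0∞) :
    ∫⁻ x, f x ∂volume[|dyadicWindow n t] = 2 ^ (n : ℝ) * ∫⁻ x in dyadicWindow n t, f x := by
  rw [ProbabilityTheory.cond, lintegral_smul_measure, volume_dyadicWindow, ENNReal.rpow_neg,
    inv_inv, smul_eq_mul]

lemma dyadicWindow_subset_Icc (n : ℕ) {t : ℝ} (ht : t ∈ Icc (0 : ℝ) 1) :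
    dyadicWindow n t ⊆ Icc 0 1 :=
  window_subset_Icc (Real.rpow_le_one_of_one_le_of_nonpos one_le_two (by simp)) ht

lemma edist_le_of_mem_dyadicWindow {n : ℕ} {t s : ℝ} (ht : t ≤ 1) (hs : s ∈ dyadicWindow n t) :
    edist t s ≤ 2 ^ (-(n : ℝ)) := by
  have := edist_le_of_mem_window (by positivity) ht hs
  rwa [← ENNReal.ofReal_rpow_of_pos two_pos, ENNReal.ofReal_ofNat] at this

lemma dyadicWindow_zero {t : ℝ} (ht : 0 ≤ t) : dyadicWindow 0 t = Icc 0 1 := by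
  simp [dyadicWindow, window_one ht]

section Dyadic

variable {E : Type*} [NormedAddCommGroup E] [MeasurableSpace E] [BorelSpace E] {v : ℝ → E}
  {σ p : ℝ}

noncomputable def gagliardoIntegral (v : ℝ → E) (σ p : ℝ) : ℝ≥0∞ :=
  ∫⁻ t in Icc 0 1, ∫⁻ r in Icc 0 1, gagliardoKernel v σ p t r

noncomputable def dyadicMeanOsc (v : ℝ → E) (n : ℕ) (t : ℝ) : ℝ≥0∞ :=
  ∫⁻ s, ‖v t - v s‖ₑ ∂volume[|dyadicWindow n t]

lemma tendsto_dyadicMeanOsc_zero (hp : 1 ≤ p) (hσ : 0 < σ) (hv : Measurable v) {t : ℝ}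
    (ht : t ∈ Icc (0 : ℝ) 1) (hG : ∫⁻ r in Icc 0 1, gagliardoKernel v σ p t r ≠ ∞) :
    Tendsto (fun n => dyadicMeanOsc v n t) atTop (𝓝 0) := by
  have hp0 : 0 < p := by linarith
  have hσp : 0 ≤ 1 + σ * p := by positivity
  have hbound : ∀ n : ℕ, dyadicMeanOsc v n t ≤
      ((2 : ℝ≥0∞) ^ (-σ)) ^ n * (∫⁻ r in Icc 0 1, gagliardoKernel v σ p t r) ^ (1 / p) := by
    intro n
    calc dyadicMeanOsc v n t
        ≤ ((2 ^ (-(n : ℝ))) ^ (1 + σ * p) *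
            (2 ^ (n : ℝ) * ∫⁻ r in Icc 0 1, gagliardoKernel v σ p t r)) ^ (1 / p) := by
          refine (lintegral_enorm_sub_le hp hσp hv (δ := 2 ^ (-(n : ℝ))) (by simp) ?_).trans ?_
          · filter_upwards [ae_cond_mem (measurableSet_window _ _)] with s hs
            exact edist_le_of_mem_dyadicWindow ht.2 hs
          · rw [lintegral_cond_dyadicWindow]
            gcongr
            exact dyadicWindow_subset_Icc _ ht
      _ = _ := by
          rw [← ENNReal.rpow_mul, ← mul_assoc, ENNReal.two_rpow_mul_two_rpow,
            ENNReal.mul_rpow_of_nonneg _ _ (by positivity), ← ENNReal.rpow_mul,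
            ← ENNReal.rpow_natCast, ← ENNReal.rpow_mul]
          congr 2
          field_simp
          ring
  have hlim : Tendsto (fun n : ℕ => ((2 : ℝ≥0∞) ^ (-σ)) ^ n *
      (∫⁻ r in Icc 0 1, gagliardoKernel v σ p t r) ^ (1 / p)) atTop (𝓝 0) := by
    simpa using ENNReal.Tendsto.mul_const (ENNReal.tendsto_pow_atTop_nhds_zero_of_lt_one
      (ENNReal.rpow_lt_one_of_one_lt_of_neg ENNReal.one_lt_two (neg_neg_of_pos hσ)))
      (Or.inr (ENNReal.rpow_ne_top_of_nonneg (by positivity) hG))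
  exact tendsto_of_tendsto_of_tendsto_of_le_of_le tendsto_const_nhds hlim (fun _ => zero_le)
    hbound

variable [SecondCountableTopology E]

lemma dyadicMeanOsc_le_succ_add (hp : 1 ≤ p) (hσp : 0 ≤ 1 + σ * p) (hv : Measurable v) {t : ℝ}
    (ht : t ∈ Icc (0 : ℝ) 1) (k : ℕ) :
    dyadicMeanOsc v k t ≤ dyadicMeanOsc v (k + 1) t +
      2 ^ ((2 + σ * p) / p) * (2 ^ (1 / p - σ)) ^ k * gagliardoIntegral v σ p ^ (1 / p) := by
  have hdist : ∀ᵐ s ∂volume[|dyadicWindow k t], ∀ᵐ u ∂volume[|dyadicWindow (k + 1) t],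
      edist s u ≤ 2 ^ (1 - (k : ℝ)) := by
    filter_upwards [ae_cond_mem (measurableSet_window _ _)] with s hs
    filter_upwards [ae_cond_mem (measurableSet_window _ _)] with u hu
    calc edist s u ≤ edist t s + edist t u := edist_triangle_left s u t
      _ ≤ 2 ^ (-(k : ℝ)) + 2 ^ (-(k : ℝ)) := by
          gcongr
          · exact edist_le_of_mem_dyadicWindow ht.2 hs
          · refine (edist_le_of_mem_dyadicWindow ht.2 hu).trans ?_
            exact ENNReal.rpow_le_rpow_of_exponent_le one_le_two (by push_cast; linarith)
      _ = 2 ^ (1 - (k : ℝ)) := by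
          rw [← two_mul, sub_eq_add_neg, ← ENNReal.two_rpow_mul_two_rpow, ENNReal.rpow_one]
  have hkernel : ∫⁻ s, ∫⁻ u, gagliardoKernel v σ p s u ∂volume[|dyadicWindow (k + 1) t]
      ∂volume[|dyadicWindow k t] ≤
        2 ^ (k : ℝ) * 2 ^ ((k + 1 : ℕ) : ℝ) * gagliardoIntegral v σ p := by
    simp only [lintegral_cond_dyadicWindow]
    rw [lintegral_const_mul' _ _ (by simp), mul_assoc]
    gcongr
    exact (lintegral_mono fun s => lintegral_mono_set (dyadicWindow_subset_Icc _ ht)).trans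
      (lintegral_mono_set (dyadicWindow_subset_Icc _ ht))
  calc dyadicMeanOsc v k t
      ≤ dyadicMeanOsc v (k + 1) t + ∫⁻ s, ∫⁻ u, ‖v s - v u‖ₑ ∂volume[|dyadicWindow (k + 1) t]
          ∂volume[|dyadicWindow k t] :=
        lintegral_enorm_sub_le_add_lintegral_lintegral _ _ hv _
    _ ≤ dyadicMeanOsc v (k + 1) t + ((2 ^ (1 - (k : ℝ))) ^ (1 + σ * p) *
          (2 ^ (k : ℝ) * 2 ^ ((k + 1 : ℕ) : ℝ) * gagliardoIntegral v σ p)) ^ (1 / p) := by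
        gcongr
        refine (lintegral_lintegral_enorm_sub_le hp hσp hv (by simp) hdist).trans ?_
        gcongr
    _ = _ := by
        have hp0 : p ≠ 0 := by positivity
        rw [← ENNReal.rpow_mul, ← mul_assoc, ENNReal.two_rpow_mul_two_rpow,
          ENNReal.two_rpow_mul_two_rpow, ENNReal.mul_rpow_of_nonneg _ _ (by positivity),
          ← ENNReal.rpow_mul, ← ENNReal.rpow_natCast, ← ENNReal.rpow_mul,
          ENNReal.two_rpow_mul_two_rpow]
        congr 3
        push_cast
        field_simp
        ring

noncomputable def morreyConst (σ p : ℝ) : ℝ≥0∞ := 2 ^ ((2 + σ * p) / p) * (1 - 2 ^ (1 / p - σ))⁻¹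

lemma two_rpow_one_div_sub_lt_one (hp : 0 < p) (hσp : 1 < σ * p) : (2 : ℝ≥0∞) ^ (1 / p - σ) < 1 :=
  ENNReal.rpow_lt_one_of_one_lt_of_neg ENNReal.one_lt_two <| by
    rw [sub_neg, div_lt_iff₀ hp]; exact hσp

lemma morreyConst_ne_top (hp : 0 < p) (hσp : 1 < σ * p) : morreyConst σ p ≠ ∞ :=
  ENNReal.mul_ne_top (by simp) <| ENNReal.inv_ne_top.2 <|
    (tsub_pos_of_lt (two_rpow_one_div_sub_lt_one hp hσp)).ne'

lemma morreyConst_ne_zero (σ p : ℝ) : morreyConst σ p ≠ 0 :=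
  mul_ne_zero (by simp) (ENNReal.inv_ne_zero.2 (by simp))

lemma lintegral_cond_Icc_enorm_sub_le (hp : 1 ≤ p) (hσp : 1 < σ * p) (hv : Measurable v) {t : ℝ}
    (ht : t ∈ Icc (0 : ℝ) 1) (hG : ∫⁻ r in Icc 0 1, gagliardoKernel v σ p t r ≠ ∞) :
    ∫⁻ s, ‖v t - v s‖ₑ ∂volume[|Icc 0 1] ≤ morreyConst σ p * gagliardoIntegral v σ p ^ (1 / p) := by
  have hσ : 0 < σ := by nlinarith
  rw [← dyadicWindow_zero ht.1]
  calc dyadicMeanOsc v 0 t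
      ≤ ∑' k, 2 ^ ((2 + σ * p) / p) * (2 ^ (1 / p - σ)) ^ k * gagliardoIntegral v σ p ^ (1 / p) :=
        ENNReal.le_tsum_of_le_add_of_tendsto_zero
          (dyadicMeanOsc_le_succ_add hp (by positivity) hv ht)
          (tendsto_dyadicMeanOsc_zero hp hσ hv ht hG)
    _ = _ := by
        rw [ENNReal.tsum_mul_right, ENNReal.tsum_mul_left, ENNReal.tsum_geometric, morreyConst]

lemma measurable_lintegral_gagliardoKernel (hv : Measurable v) :
    Measurable fun t => ∫⁻ r in Icc 0 1, gagliardoKernel v σ p t r :=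
  Measurable.lintegral_prod_right' <|
    (((hv.comp measurable_fst).sub (hv.comp measurable_snd)).enorm.pow_const p).div
      (measurable_edist.pow_const _)

theorem essSup_enorm_sub_le (hp : 1 ≤ p) (hσp : 1 < σ * p) (hv : Measurable v) :
    essSup (fun q : ℝ × ℝ => ‖v q.1 - v q.2‖ₑ) (volume.restrict (Icc 0 1 ×ˢ Icc 0 1)) ≤
      2 * morreyConst σ p * gagliardoIntegral v σ p ^ (1 / p) := by
  have hp0 : 0 < p := by linarith
  by_cases hI : gagliardoIntegral v σ p = ∞
  · rw [hI, ENNReal.top_rpow_of_pos (by positivity),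
      ENNReal.mul_top (by simp [morreyConst_ne_zero])]
    exact le_top
  have : IsProbabilityMeasure (volume[|Icc (0 : ℝ) 1]) :=
    cond_isProbabilityMeasure_of_finite (by simp) (by simp)
  have hgood : ∀ᵐ t ∂volume.restrict (Icc (0 : ℝ) 1), ∫⁻ s, ‖v t - v s‖ₑ ∂volume[|Icc 0 1] ≤
      morreyConst σ p * gagliardoIntegral v σ p ^ (1 / p) := by
    filter_upwards [ae_restrict_mem measurableSet_Icc,
      ae_lt_top (measurable_lintegral_gagliardoKernel hv) hI] with t ht hG
    exact lintegral_cond_Icc_enorm_sub_le hp hσp hv ht hG.ne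
  rw [Measure.volume_eq_prod, ← Measure.prod_restrict]
  refine essSup_le_of_ae_le _ ?_
  filter_upwards [Measure.quasiMeasurePreserving_fst.ae hgood,
    Measure.quasiMeasurePreserving_snd.ae hgood] with q h₁ h₂
  calc ‖v q.1 - v q.2‖ₑ
      ≤ ∫⁻ s, ‖v q.1 - v s‖ₑ ∂volume[|Icc 0 1] + ∫⁻ s, ‖v q.2 - v s‖ₑ ∂volume[|Icc 0 1] :=
        enorm_sub_le_lintegral_add _ hv _ _
    _ ≤ _ := by rw [mul_assoc, two_mul]; exact add_le_add h₁ h₂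

end Dyadic

theorem stmt_7_general (σ p : ℝ) (hp : 1 ≤ p) (hσp : 1 < σ * p) :
    ∃ C : ℝ, 0 < C ∧
      ∀ (m : ℕ) (v : ℝ → EuclideanSpace ℝ (Fin m)), Measurable v →
        (essSup (fun q : ℝ × ℝ => (‖v q.1 - v q.2‖₊ : ℝ≥0∞))
            ((volume : Measure (ℝ × ℝ)).restrict (Set.Icc 0 1 ×ˢ Set.Icc 0 1))) ^ p
          ≤ ENNReal.ofReal C *
            ∫⁻ t in Set.Icc (0 : ℝ) 1, ∫⁻ r in Set.Icc (0 : ℝ) 1,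
              (‖v t - v r‖₊ : ℝ≥0∞) ^ p / (‖t - r‖₊ : ℝ≥0∞) ^ (1 + σ * p) := by
  have hp0 : 0 < p := by linarith
  have hK : (2 * morreyConst σ p) ^ p ≠ ∞ :=
    ENNReal.rpow_ne_top_of_nonneg hp0.le (ENNReal.mul_ne_top (by simp) (morreyConst_ne_top hp0 hσp))
  refine ⟨((2 * morreyConst σ p) ^ p).toReal, ENNReal.toReal_pos (by simp [morreyConst_ne_zero,
    hp0, hp0.le]) hK, fun m v hv => ?_⟩
  have hI : ∫⁻ t in Icc (0 : ℝ) 1, ∫⁻ r in Icc (0 : ℝ) 1,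
      (‖v t - v r‖₊ : ℝ≥0∞) ^ p / (‖t - r‖₊ : ℝ≥0∞) ^ (1 + σ * p) = gagliardoIntegral v σ p := by
    simp only [gagliardoIntegral, gagliardoKernel, edist_eq_enorm_sub]; rfl
  rw [ENNReal.ofReal_toReal hK, hI]
  calc _ ≤ (2 * morreyConst σ p * gagliardoIntegral v σ p ^ (1 / p)) ^ p :=
        ENNReal.rpow_le_rpow (essSup_enorm_sub_le hp hσp hv) hp0.le
    _ = _ := by
        rw [ENNReal.mul_rpow_of_nonneg _ _ hp0.le, ← ENNReal.rpow_mul, one_div_mul_cancel hp0.ne',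
          ENNReal.rpow_one]

/-- one-dimensional fractional Morrey–Sobolev oscillation estimate for
`σp > 1`: the essential oscillation of `v` on `[0,1]` is controlled by its Gagliardo
`W^{σ,p}` seminorm. -/
theorem stmt_7 (σ p : ℝ) (hσ : 0 < σ) (hσ1 : σ < 1) (hp : 1 ≤ p) (hσp : 1 < σ * p) :
    ∃ C : ℝ, 0 < C ∧
      ∀ (m : ℕ) (v : ℝ → EuclideanSpace ℝ (Fin m)), Measurable v →
        (essSup (fun q : ℝ × ℝ => (‖v q.1 - v q.2‖₊ : ℝ≥0∞))
            ((volume : Measure (ℝ × ℝ)).restrict (Set.Icc 0 1 ×ˢ Set.Icc 0 1))) ^ p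
          ≤ ENNReal.ofReal C *
            ∫⁻ t in Set.Icc (0 : ℝ) 1, ∫⁻ r in Set.Icc (0 : ℝ) 1,
              (‖v t - v r‖₊ : ℝ≥0∞) ^ p / (‖t - r‖₊ : ℝ≥0∞) ^ (1 + σ * p) :=
  stmt_7_general σ p hp hσp
end

section
/- Let 0 < s < 1 and 1 ≤ p < ∞ with sp < 1, let b₀, b₁ ∈ ℝ^m, and for j ∈ ℕ, j ≥ 1, define u_j : (0,1) → ℝ^m by u_j(x) = b₀ if jx ∈ [2k, 2k+1) for some integer k, and u_j(x) = b₁ if jx ∈ [2k+1, 2k+2) for some integer k. Then ∬_{(0,1)×(0,1)} |u_j(y) − u_j(x)|^p / |y − x|^{1+sp} dy dx ≤ 2 j^{sp} |b₀ − b₁|^p / (sp(1 − sp)). In particular u_j belongs to Ẇ^{s,p}((0,1), ℝ^m). -/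
/-!
On a cell `I = (a, b)` of the uniform partition of `(0, 1)` into `j` intervals, `u_j` is constant,
so for `x ∈ I` the inner integral only sees `y ∉ I`, where `|u_j y - u_j x| ≤ |b₀ - b₁|`.
Integrating `|y - x|^{-(1+sp)}` over the complement of `I` gives
`((x - a)^{-sp} + (b - x)^{-sp}) / sp`, whose integral over `I` is `2 j^{sp-1} / (sp (1 - sp))`:
this is finite exactly because `sp < 1`. Summing over the `j` cells gives the bound.
-/

open MeasureTheory Set
open scoped ENNReal NNReal

/-- The oscillating step function `u_j` taking value `b₀` on `[2k/j, (2k+1)/j)` and `b₁` on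
`[(2k+1)/j, (2k+2)/j)`: `u_j(x) = b₀` iff `⌊j x⌋` is even. -/
noncomputable def uj {m : ℕ} (b₀ b₁ : EuclideanSpace ℝ (Fin m)) (j : ℕ) (x : ℝ) :
    EuclideanSpace ℝ (Fin m) :=
  if Even ⌊(j : ℝ) * x⌋ then b₀ else b₁

section PowerIntegrals

variable {σ : ℝ}

theorem lintegral_Ici_rpow_neg_one_sub (hσ : 0 < σ) {c : ℝ} (hc : 0 < c) :
    ∫⁻ t in Ici c, ENNReal.ofReal (t ^ (-(1 + σ))) = ENNReal.ofReal (c ^ (-σ) / σ) := by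
  have hexp : -(1 + σ) < -1 := by linarith
  rw [setLIntegral_congr Ioi_ae_eq_Ici.symm, ← ofReal_integral_eq_lintegral_ofReal
    (integrableOn_Ioi_rpow_of_lt hexp hc)
    (ae_restrict_of_forall_mem measurableSet_Ioi fun t ht => Real.rpow_nonneg (hc.trans ht).le _),
    integral_Ioi_rpow_of_lt hexp hc]
  congr 1
  rw [show -(1 + σ) + 1 = -σ by ring]
  field_simp

theorem lintegral_Ioo_zero_rpow_neg (hσ : σ < 1) {L : ℝ} (hL : 0 < L) :
    ∫⁻ t in Ioo 0 L, ENNReal.ofReal (t ^ (-σ)) = ENNReal.ofReal (L ^ (1 - σ) / (1 - σ)) := by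
  have hexp : -1 < -σ := by linarith
  have hint : IntegrableOn (fun t : ℝ => t ^ (-σ)) (Ioc 0 L) :=
    (intervalIntegrable_iff_integrableOn_Ioc_of_le hL.le).1
      (intervalIntegral.intervalIntegrable_rpow' hexp)
  rw [setLIntegral_congr Ioo_ae_eq_Ioc, ← ofReal_integral_eq_lintegral_ofReal hint
    (ae_restrict_of_forall_mem measurableSet_Ioc fun t ht => Real.rpow_nonneg ht.1.le _),
    ← intervalIntegral.integral_of_le hL.le, integral_rpow (Or.inl hexp),
    Real.zero_rpow (by linarith), show -σ + 1 = 1 - σ by ring, sub_zero]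

theorem lintegral_Ici_abs_sub_rpow (hσ : 0 < σ) {x b : ℝ} (hxb : x < b) :
    ∫⁻ y in Ici b, ENNReal.ofReal (|y - x| ^ (-(1 + σ))) = ENNReal.ofReal ((b - x) ^ (-σ) / σ) := by
  have h := (measurePreserving_add_right volume x).setLIntegral_comp_preimage_emb
    (MeasurableEquiv.addRight x).measurableEmbedding
    (fun y => ENNReal.ofReal (|y - x| ^ (-(1 + σ)))) (Ici b)
  simp only [preimage_add_const_Ici, add_sub_cancel_right] at h
  rw [← h, ← lintegral_Ici_rpow_neg_one_sub hσ (sub_pos.2 hxb)]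
  refine setLIntegral_congr_fun measurableSet_Ici fun t ht => ?_
  rw [abs_of_pos ((sub_pos.2 hxb).trans_le ht)]

theorem lintegral_Iic_abs_sub_rpow (hσ : 0 < σ) {x a : ℝ} (hax : a < x) :
    ∫⁻ y in Iic a, ENNReal.ofReal (|y - x| ^ (-(1 + σ))) = ENNReal.ofReal ((x - a) ^ (-σ) / σ) := by
  have h := (Measure.measurePreserving_neg volume).setLIntegral_comp_preimage_emb
    (MeasurableEquiv.neg ℝ).measurableEmbedding
    (fun y => ENNReal.ofReal (|y - x| ^ (-(1 + σ)))) (Iic a)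
  simp only [neg_preimage, neg_Iic] at h
  rw [← h, ← neg_sub_neg a x, ← lintegral_Ici_abs_sub_rpow hσ (neg_lt_neg hax)]
  refine setLIntegral_congr_fun measurableSet_Ici fun t _ => ?_
  rw [show -t - x = -(t - -x) by ring, abs_neg]

theorem lintegral_Ioo_sub_left_rpow (hσ : σ < 1) {a b : ℝ} (hab : a < b) :
    ∫⁻ x in Ioo a b, ENNReal.ofReal ((x - a) ^ (-σ))
      = ENNReal.ofReal ((b - a) ^ (1 - σ) / (1 - σ)) := by
  have h := (measurePreserving_add_right volume a).setLIntegral_comp_preimage_emb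
    (MeasurableEquiv.addRight a).measurableEmbedding
    (fun x => ENNReal.ofReal ((x - a) ^ (-σ))) (Ioo a b)
  simp only [preimage_add_const_Ioo, add_sub_cancel_right, sub_self] at h
  rw [← h, lintegral_Ioo_zero_rpow_neg hσ (sub_pos.2 hab)]

theorem lintegral_Ioo_sub_right_rpow (hσ : σ < 1) {a b : ℝ} (hab : a < b) :
    ∫⁻ x in Ioo a b, ENNReal.ofReal ((b - x) ^ (-σ))
      = ENNReal.ofReal ((b - a) ^ (1 - σ) / (1 - σ)) := by
  have h := (Measure.measurePreserving_sub_left volume b).setLIntegral_comp_preimage_emb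
    (MeasurableEquiv.subLeft b).measurableEmbedding
    (fun x => ENNReal.ofReal ((b - x) ^ (-σ))) (Ioo a b)
  simp only [preimage_const_sub_Ioo, sub_sub_cancel, sub_self] at h
  rw [← h, lintegral_Ioo_zero_rpow_neg hσ (sub_pos.2 hab)]

end PowerIntegrals

theorem setLIntegral_Ico_le_sum_Ioo (f : ℝ → ℝ≥0∞) (a : ℕ → ℝ) (n : ℕ) :
    ∫⁻ x in Ico (a 0) (a n), f x ≤ ∑ k ∈ Finset.range n, ∫⁻ x in Ioo (a k) (a (k + 1)), f x := by
  induction n with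
  | zero => simp
  | succ n ih =>
    calc ∫⁻ x in Ico (a 0) (a (n + 1)), f x
        ≤ ∫⁻ x in Ico (a 0) (a n) ∪ Ico (a n) (a (n + 1)), f x :=
          lintegral_mono_set Ico_subset_Ico_union_Ico
      _ ≤ (∫⁻ x in Ico (a 0) (a n), f x) + ∫⁻ x in Ico (a n) (a (n + 1)), f x :=
          lintegral_union_le f _ _
      _ ≤ ∑ k ∈ Finset.range (n + 1), ∫⁻ x in Ioo (a k) (a (k + 1)), f x := by
          rw [Finset.sum_range_succ]
          exact add_le_add ih (setLIntegral_congr Ioo_ae_eq_Ico).ge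

section GagliardoKernel

variable {E : Type*} [NormedAddCommGroup E] {u : ℝ → E} {D p σ : ℝ}

theorem coe_nnnorm_rpow_div_le {v : E} (hp : 0 ≤ p) (hv : ‖v‖ ≤ D) {t : ℝ} (ht : t ≠ 0) :
    (‖v‖₊ : ℝ≥0∞) ^ p / (‖t‖₊ : ℝ≥0∞) ^ (1 + σ)
      ≤ ENNReal.ofReal (D ^ p) * ENNReal.ofReal (|t| ^ (-(1 + σ))) := by
  rw [div_eq_mul_inv, ← enorm_eq_nnnorm, ← enorm_eq_nnnorm, ← ofReal_norm, ← ofReal_norm,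
    Real.norm_eq_abs, ENNReal.ofReal_rpow_of_pos (abs_pos.2 ht), Real.rpow_neg (abs_nonneg t),
    ← ENNReal.ofReal_inv_of_pos (by positivity), ENNReal.ofReal_rpow_of_nonneg (norm_nonneg v) hp]
  gcongr

theorem lintegral_gagliardo_kernel_le {a b x : ℝ} (hp : 0 < p) (hσ : 0 < σ)
    (hx : x ∈ Ioo a b) (hu : ∀ y ∈ Ioo a b, u y = u x) (hD : ∀ y, ‖u y - u x‖ ≤ D) :
    ∫⁻ y, (‖u y - u x‖₊ : ℝ≥0∞) ^ p / (‖y - x‖₊ : ℝ≥0∞) ^ (1 + σ)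
      ≤ ENNReal.ofReal (D ^ p / σ * ((x - a) ^ (-σ) + (b - x) ^ (-σ))) := by
  set g : ℝ → ℝ≥0∞ := fun y => ENNReal.ofReal (D ^ p) * ENNReal.ofReal (|y - x| ^ (-(1 + σ)))
  have hD0 : 0 ≤ D := by simpa using hD x
  calc ∫⁻ y, (‖u y - u x‖₊ : ℝ≥0∞) ^ p / (‖y - x‖₊ : ℝ≥0∞) ^ (1 + σ)
      ≤ ∫⁻ y, (Ioo a b)ᶜ.indicator g y := by
        refine lintegral_mono fun y => ?_
        by_cases hy : y ∈ Ioo a b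
        · simp [hu y hy, ENNReal.zero_rpow_of_pos hp]
        · rw [indicator_of_mem hy]
          exact coe_nnnorm_rpow_div_le hp.le (hD y)
            (sub_ne_zero.2 (ne_of_mem_of_not_mem hx hy).symm)
    _ = ∫⁻ y in (Ioo a b)ᶜ, g y := lintegral_indicator measurableSet_Ioo.compl g
    _ ≤ ∫⁻ y in Iic a ∪ Ici b, g y := lintegral_mono_set fun y hy => by
        simpa [or_iff_not_imp_left] using hy
    _ ≤ (∫⁻ y in Iic a, g y) + ∫⁻ y in Ici b, g y := lintegral_union_le g _ _
    _ = ENNReal.ofReal (D ^ p / σ * ((x - a) ^ (-σ) + (b - x) ^ (-σ))) := by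
        rw [lintegral_const_mul _ (by fun_prop), lintegral_const_mul _ (by fun_prop),
          lintegral_Iic_abs_sub_rpow hσ hx.1, lintegral_Ici_abs_sub_rpow hσ hx.2, ← mul_add,
          ← ENNReal.ofReal_add (div_nonneg (Real.rpow_nonneg (sub_pos.2 hx.1).le _) hσ.le)
            (div_nonneg (Real.rpow_nonneg (sub_pos.2 hx.2).le _) hσ.le),
          ← ENNReal.ofReal_mul (by positivity)]
        congr 1
        ring

theorem setLIntegral_Ioo_lintegral_gagliardo_le {a b : ℝ} (hp : 0 < p) (hσ0 : 0 < σ) (hσ1 : σ < 1)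
    (hab : a < b) (hu : ∀ x ∈ Ioo a b, ∀ y ∈ Ioo a b, u y = u x) (hD : ∀ x y, ‖u y - u x‖ ≤ D) :
    ∫⁻ x in Ioo a b, ∫⁻ y, (‖u y - u x‖₊ : ℝ≥0∞) ^ p / (‖y - x‖₊ : ℝ≥0∞) ^ (1 + σ)
      ≤ ENNReal.ofReal (2 * D ^ p * (b - a) ^ (1 - σ) / (σ * (1 - σ))) := by
  have hD0 : 0 ≤ D := by simpa using hD a a
  have hI : 0 ≤ (b - a) ^ (1 - σ) / (1 - σ) :=
    div_nonneg (Real.rpow_nonneg (sub_pos.2 hab).le _) (sub_pos.2 hσ1).le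
  calc ∫⁻ x in Ioo a b, ∫⁻ y, (‖u y - u x‖₊ : ℝ≥0∞) ^ p / (‖y - x‖₊ : ℝ≥0∞) ^ (1 + σ)
      ≤ ∫⁻ x in Ioo a b, ENNReal.ofReal (D ^ p / σ * ((x - a) ^ (-σ) + (b - x) ^ (-σ))) :=
        setLIntegral_mono (by fun_prop) fun x hx =>
          lintegral_gagliardo_kernel_le hp hσ0 hx (hu x hx) (hD x)
    _ = ∫⁻ x in Ioo a b, ENNReal.ofReal (D ^ p / σ) *
          (ENNReal.ofReal ((x - a) ^ (-σ)) + ENNReal.ofReal ((b - x) ^ (-σ))) := by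
        refine setLIntegral_congr_fun measurableSet_Ioo fun x hx => ?_
        rw [ENNReal.ofReal_mul (by positivity), ENNReal.ofReal_add
          (Real.rpow_nonneg (sub_pos.2 hx.1).le _) (Real.rpow_nonneg (sub_pos.2 hx.2).le _)]
    _ = ENNReal.ofReal (2 * D ^ p * (b - a) ^ (1 - σ) / (σ * (1 - σ))) := by
        rw [lintegral_const_mul _ (by fun_prop), lintegral_add_left (by fun_prop),
          lintegral_Ioo_sub_left_rpow hσ1 hab, lintegral_Ioo_sub_right_rpow hσ1 hab,
          ← ENNReal.ofReal_add hI hI, ← ENNReal.ofReal_mul (by positivity)]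
        congr 1
        field_simp
        ring

theorem setLIntegral_lintegral_gagliardo_le_of_uniform_steps {n : ℕ} (hp : 0 < p) (hσ0 : 0 < σ)
    (hσ1 : σ < 1) (hn : 0 < n)
    (hu : ∀ k : ℕ, ∀ x ∈ Ioo ((k : ℝ) / n) ((k + 1) / n),
      ∀ y ∈ Ioo ((k : ℝ) / n) ((k + 1) / n), u y = u x)
    (hD : ∀ x y, ‖u y - u x‖ ≤ D) :
    ∫⁻ x in Ioo (0 : ℝ) 1, ∫⁻ y in Ioo (0 : ℝ) 1,
        (‖u y - u x‖₊ : ℝ≥0∞) ^ p / (‖y - x‖₊ : ℝ≥0∞) ^ (1 + σ)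
      ≤ ENNReal.ofReal (2 * (n : ℝ) ^ σ * D ^ p / (σ * (1 - σ))) := by
  have hN : (0 : ℝ) < n := Nat.cast_pos.2 hn
  set cell : ℕ → ℝ := fun k => k / n
  have hcover : Ioo (0 : ℝ) 1 ⊆ Ico (cell 0) (cell n) := by
    simp [cell, div_self hN.ne', Ioo_subset_Ico_self]
  have hwidth : ∀ k, cell (k + 1) - cell k = (n : ℝ)⁻¹ := fun k => by
    simp only [cell]; push_cast; field_simp; ring
  have hscale : (n : ℝ) * (n : ℝ)⁻¹ ^ (1 - σ) = (n : ℝ) ^ σ := by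
    rw [Real.inv_rpow hN.le, Real.rpow_sub hN, Real.rpow_one]
    field_simp
  calc ∫⁻ x in Ioo (0 : ℝ) 1, ∫⁻ y in Ioo (0 : ℝ) 1,
        (‖u y - u x‖₊ : ℝ≥0∞) ^ p / (‖y - x‖₊ : ℝ≥0∞) ^ (1 + σ)
      ≤ ∫⁻ x in Ico (cell 0) (cell n), ∫⁻ y,
          (‖u y - u x‖₊ : ℝ≥0∞) ^ p / (‖y - x‖₊ : ℝ≥0∞) ^ (1 + σ) :=
        (lintegral_mono fun x => setLIntegral_le_lintegral _ _).trans (lintegral_mono_set hcover)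
    _ ≤ ∑ k ∈ Finset.range n, ∫⁻ x in Ioo (cell k) (cell (k + 1)), ∫⁻ y,
          (‖u y - u x‖₊ : ℝ≥0∞) ^ p / (‖y - x‖₊ : ℝ≥0∞) ^ (1 + σ) :=
        setLIntegral_Ico_le_sum_Ioo _ cell n
    _ ≤ ∑ k ∈ Finset.range n,
          ENNReal.ofReal (2 * D ^ p * (cell (k + 1) - cell k) ^ (1 - σ) / (σ * (1 - σ))) :=
        Finset.sum_le_sum fun k _ => setLIntegral_Ioo_lintegral_gagliardo_le hp hσ0 hσ1
          (by simp only [cell]; gcongr; simp)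
          (fun x hx y hy => hu k x (by simpa [cell] using hx) y (by simpa [cell] using hy)) hD
    _ = ENNReal.ofReal (2 * (n : ℝ) ^ σ * D ^ p / (σ * (1 - σ))) := by
        simp only [hwidth, Finset.sum_const, Finset.card_range, nsmul_eq_mul]
        rw [← ENNReal.ofReal_natCast, ← ENNReal.ofReal_mul hN.le, ← hscale]
        congr 1
        ring

end GagliardoKernel

theorem floor_mul_eq_of_mem_Ioo {J y : ℝ} (hJ : 0 < J) {k : ℕ}
    (hy : y ∈ Ioo ((k : ℝ) / J) ((k + 1) / J)) : ⌊J * y⌋ = k := by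
  rw [mem_Ioo, div_lt_iff₀' hJ, lt_div_iff₀' hJ] at hy
  rw [Int.floor_eq_iff]
  push_cast
  exact ⟨hy.1.le, hy.2⟩

section Oscillation

variable {m : ℕ} (b₀ b₁ : EuclideanSpace ℝ (Fin m))

theorem uj_eq_of_mem_Ioo {j : ℕ} (hj : 0 < j) {k : ℕ} {x y : ℝ}
    (hx : x ∈ Ioo ((k : ℝ) / j) ((k + 1) / j)) (hy : y ∈ Ioo ((k : ℝ) / j) ((k + 1) / j)) :
    uj b₀ b₁ j y = uj b₀ b₁ j x := by
  have hJ : (0 : ℝ) < j := Nat.cast_pos.2 hj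
  simp only [uj, floor_mul_eq_of_mem_Ioo hJ hx, floor_mul_eq_of_mem_Ioo hJ hy]

theorem norm_uj_sub_le (j : ℕ) (x y : ℝ) : ‖uj b₀ b₁ j y - uj b₀ b₁ j x‖ ≤ ‖b₀ - b₁‖ := by
  unfold uj
  split_ifs <;> simp [norm_sub_rev b₁ b₀]

end Oscillation

theorem stmt_9_general (m : ℕ) (s p : ℝ) (hs : 0 < s) (hp : 1 ≤ p) (hsp : s * p < 1)
    (b₀ b₁ : EuclideanSpace ℝ (Fin m)) (j : ℕ) (hj : 1 ≤ j) :
    (∫⁻ x in Set.Ioo (0 : ℝ) 1, ∫⁻ y in Set.Ioo (0 : ℝ) 1,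
        (‖uj b₀ b₁ j y - uj b₀ b₁ j x‖₊ : ℝ≥0∞) ^ p / (‖y - x‖₊ : ℝ≥0∞) ^ (1 + s * p))
      ≤ ENNReal.ofReal (2 * (j : ℝ) ^ (s * p) * ‖b₀ - b₁‖ ^ p / (s * p * (1 - s * p))) ∧
    (∫⁻ x in Set.Ioo (0 : ℝ) 1, ∫⁻ y in Set.Ioo (0 : ℝ) 1,
        (‖uj b₀ b₁ j y - uj b₀ b₁ j x‖₊ : ℝ≥0∞) ^ p / (‖y - x‖₊ : ℝ≥0∞) ^ (1 + s * p)) < ⊤ := by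
  have hbound := setLIntegral_lintegral_gagliardo_le_of_uniform_steps
    (one_pos.trans_le hp) (mul_pos hs (one_pos.trans_le hp)) hsp hj
    (fun _ _ hx _ hy => uj_eq_of_mem_Ioo b₀ b₁ hj hx hy) (norm_uj_sub_le b₀ b₁ j)
  exact ⟨hbound, hbound.trans_lt ENNReal.ofReal_lt_top⟩

/-- upper bound on the Gagliardo seminorm of the oscillating step functions
when `sp < 1`; in particular `u_j ∈ Ẇ^{s,p}((0,1), ℝ^m)`. -/
theorem stmt_9 (m : ℕ) (s p : ℝ) (hs : 0 < s) (hs1 : s < 1) (hp : 1 ≤ p) (hsp : s * p < 1)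
    (b₀ b₁ : EuclideanSpace ℝ (Fin m)) (j : ℕ) (hj : 1 ≤ j) :
    (∫⁻ x in Set.Ioo (0 : ℝ) 1, ∫⁻ y in Set.Ioo (0 : ℝ) 1,
        (‖uj b₀ b₁ j y - uj b₀ b₁ j x‖₊ : ℝ≥0∞) ^ p / (‖y - x‖₊ : ℝ≥0∞) ^ (1 + s * p))
      ≤ ENNReal.ofReal (2 * (j : ℝ) ^ (s * p) * ‖b₀ - b₁‖ ^ p / (s * p * (1 - s * p))) ∧
    (∫⁻ x in Set.Ioo (0 : ℝ) 1, ∫⁻ y in Set.Ioo (0 : ℝ) 1,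
        (‖uj b₀ b₁ j y - uj b₀ b₁ j x‖₊ : ℝ≥0∞) ^ p / (‖y - x‖₊ : ℝ≥0∞) ^ (1 + s * p)) < ⊤ :=
  stmt_9_general m s p hs hp hsp b₀ b₁ j hj
end

section
/- Let 0 < s < 1 and 1 ≤ p < ∞ with sp < 1, let b₀, b₁ ∈ ℝ^m, and for j ∈ ℕ, j ≥ 1, define u_j : (0,1) → ℝ^m by u_j(x) = b₀ if jx ∈ [2k, 2k+1) for some integer k, and u_j(x) = b₁ if jx ∈ [2k+1, 2k+2) for some integer k. Then ∬_{(0,1)×(0,1)} |u_j(y) − u_j(x)|^p / |y − x|^{1+sp} dy dx ≥ 2 (1 − 1/j) j^{sp} (1 − 2^{−sp}) |b₁ − b₀|^p / (sp(1 − sp)). -/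
open MeasureTheory Set
open scoped ENNReal NNReal

/-!
On each of the `j - 1` products `(k/j, (k+1)/j) × ((k+1)/j, (k+2)/j)` of adjacent cells, `⌊j x⌋`
and `⌊j y⌋` are consecutive integers, so `uj` takes both values and the integrand is exactly
`|b₁ - b₀|^p (y - x)^{-(1+σ)}` with `σ = s p`. Integrating this kernel over two adjacent
intervals of length `h` gives `2 h^{1-σ} (1 - 2^{-σ}) / (σ (1 - σ))`, finite because `σ < 1`;
summing over the disjoint cells with `h = 1/j` yields the bound.
-/

lemma lintegral_Ioo_ofReal_eq_intervalIntegral {f : ℝ → ℝ} {a b : ℝ} (hab : a ≤ b)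
    (hf : IntervalIntegrable f volume a b) (hf₀ : ∀ x ∈ Ioo a b, 0 ≤ f x) :
    ∫⁻ x in Ioo a b, ENNReal.ofReal (f x) = ENNReal.ofReal (∫ x in a..b, f x) := by
  rw [intervalIntegral.integral_of_le hab, integral_Ioc_eq_integral_Ioo,
    ofReal_integral_eq_lintegral_ofReal (hf.1.mono_set Ioo_subset_Ioc_self)
      ((ae_restrict_iff' measurableSet_Ioo).2 (ae_of_all _ hf₀))]

lemma intervalIntegrable_sub_rpow {r : ℝ} (hr : -1 < r) (a b c : ℝ) :
    IntervalIntegrable (fun x => (c - x) ^ r) volume a b := by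
  simpa using
    (intervalIntegral.intervalIntegrable_rpow' (a := c - a) (b := c - b) hr).comp_sub_left c

lemma integral_sub_rpow {r : ℝ} (hr : -1 < r) (a b c : ℝ) :
    ∫ x in a..b, (c - x) ^ r = ((c - a) ^ (r + 1) - (c - b) ^ (r + 1)) / (r + 1) := by
  rw [intervalIntegral.integral_comp_sub_left (fun t => t ^ r) c, integral_rpow (Or.inl hr)]

lemma lintegral_Ioo_sub_rpow {σ : ℝ} (hσ : σ ≠ 0) {x a b : ℝ} (hxa : x < a) (hab : a ≤ b) :
    ∫⁻ y in Ioo a b, ENNReal.ofReal ((y - x) ^ (-(1 + σ))) =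
      ENNReal.ofReal (((a - x) ^ (-σ) - (b - x) ^ (-σ)) / σ) := by
  have hpos : ∀ y ∈ uIcc a b, 0 < y - x := fun y hy => by
    rw [uIcc_of_le hab] at hy
    linarith [hy.1]
  have hcont : ContinuousOn (fun y => (y - x) ^ (-(1 + σ))) (uIcc a b) :=
    (continuous_id.sub continuous_const).continuousOn.rpow_const
      fun y hy => Or.inl (hpos y hy).ne'
  have hzero : (0 : ℝ) ∉ uIcc (a - x) (b - x) := fun h => by
    rw [uIcc_of_le (by linarith)] at h
    linarith [h.1]
  have hnonneg : ∀ y ∈ Ioo a b, 0 ≤ (y - x) ^ (-(1 + σ)) := fun y hy =>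
    Real.rpow_nonneg (hpos y (Ioo_subset_Icc_self.trans Icc_subset_uIcc hy)).le _
  rw [lintegral_Ioo_ofReal_eq_intervalIntegral hab hcont.intervalIntegrable hnonneg,
    intervalIntegral.integral_comp_sub_right (fun t => t ^ (-(1 + σ))) x,
    integral_rpow (Or.inr ⟨fun h => hσ (by linarith), hzero⟩), show -(1 + σ) + 1 = -σ by ring]
  congr 1
  ring

lemma lintegral_Ioo_lintegral_Ioo_adjacent {σ : ℝ} (hσ₀ : 0 < σ) (hσ₁ : σ < 1) (a : ℝ)
    {h : ℝ} (hh : 0 < h) :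
    ∫⁻ x in Ioo a (a + h), ∫⁻ y in Ioo (a + h) (a + 2 * h),
        ENNReal.ofReal ((y - x) ^ (-(1 + σ))) =
      ENNReal.ofReal (2 * h ^ (1 - σ) * (1 - 2 ^ (-σ)) / (σ * (1 - σ))) := by
  have hr : -1 < -σ := by linarith
  have hσ₁' : 1 - σ ≠ 0 := by linarith
  have hinner : ∀ x ∈ Ioo a (a + h), ∫⁻ y in Ioo (a + h) (a + 2 * h),
      ENNReal.ofReal ((y - x) ^ (-(1 + σ))) =
        ENNReal.ofReal (((a + h - x) ^ (-σ) - (a + 2 * h - x) ^ (-σ)) / σ) :=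
    fun x hx => lintegral_Ioo_sub_rpow hσ₀.ne' hx.2 (by linarith)
  have hnonneg : ∀ x ∈ Ioo a (a + h),
      0 ≤ ((a + h - x) ^ (-σ) - (a + 2 * h - x) ^ (-σ)) / σ := fun x hx =>
    div_nonneg (sub_nonneg.2 (Real.rpow_le_rpow_of_nonpos (by linarith [hx.2]) (by linarith)
      (by linarith))) hσ₀.le
  have hnear : ∫ x in a..a + h, (a + h - x) ^ (-σ) = h ^ (1 - σ) / (1 - σ) := by
    rw [integral_sub_rpow hr, show -σ + 1 = 1 - σ by ring, sub_self, add_sub_cancel_left,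
      Real.zero_rpow hσ₁', sub_zero]
  have hfar : ∫ x in a..a + h, (a + 2 * h - x) ^ (-σ) =
      (2 * 2 ^ (-σ) - 1) * h ^ (1 - σ) / (1 - σ) := by
    rw [integral_sub_rpow hr, show -σ + 1 = 1 + -σ by ring, show a + 2 * h - a = 2 * h by ring,
      show a + 2 * h - (a + h) = h by ring, Real.mul_rpow zero_le_two hh.le,
      Real.rpow_add zero_lt_two, Real.rpow_one, ← sub_eq_add_neg]
    ring
  rw [setLIntegral_congr_fun measurableSet_Ioo hinner,
    lintegral_Ioo_ofReal_eq_intervalIntegral (by linarith)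
      (((intervalIntegrable_sub_rpow hr _ _ _).sub
        (intervalIntegrable_sub_rpow hr _ _ _)).div_const σ) hnonneg,
    intervalIntegral.integral_div, intervalIntegral.integral_sub
      (intervalIntegrable_sub_rpow hr _ _ _) (intervalIntegrable_sub_rpow hr _ _ _),
    hnear, hfar]
  congr 1
  field_simp
  ring

lemma enorm_rpow_div_enorm_sub_rpow {E : Type*} [NormedAddCommGroup E] (v : E) {p : ℝ}
    (hp : 0 ≤ p) (t : ℝ) {x y : ℝ} (hxy : x < y) :
    (‖v‖₊ : ℝ≥0∞) ^ p / (‖y - x‖₊ : ℝ≥0∞) ^ t =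
      ENNReal.ofReal (‖v‖ ^ p) * ENNReal.ofReal ((y - x) ^ (-t)) := by
  have hyx : 0 < y - x := sub_pos.2 hxy
  rw [← enorm_eq_nnnorm, ← enorm_eq_nnnorm, ← ofReal_norm, ← ofReal_norm,
    Real.norm_of_nonneg hyx.le, ENNReal.ofReal_rpow_of_nonneg (norm_nonneg _) hp,
    ENNReal.ofReal_rpow_of_pos hyx, div_eq_mul_inv,
    ← ENNReal.ofReal_inv_of_pos (Real.rpow_pos_of_pos hyx _), Real.rpow_neg hyx.le]

lemma floor_mul_eq_of_mem_Ico {j x : ℝ} (hj : 0 < j) {k : ℤ}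
    (hx : x ∈ Ico (k / j) ((k + 1) / j)) : ⌊j * x⌋ = k := by
  rw [Int.floor_eq_iff]
  constructor
  · linarith [(div_le_iff₀ hj).1 hx.1]
  · linarith [(lt_div_iff₀ hj).1 hx.2]

lemma norm_uj_sub_uj_of_floor_succ {m : ℕ} (b₀ b₁ : EuclideanSpace ℝ (Fin m)) {j : ℕ}
    {x y : ℝ} {n : ℤ} (hx : ⌊(j : ℝ) * x⌋ = n) (hy : ⌊(j : ℝ) * y⌋ = n + 1) :
    ‖uj b₀ b₁ j y - uj b₀ b₁ j x‖ = ‖b₁ - b₀‖ := by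
  rcases Int.even_or_odd n with hn | hn
  · simp [uj, hx, hy, hn, Int.not_odd_iff_even.2 hn]
  · simp [uj, hx, hy, hn, Int.not_even_iff_odd.2 hn, norm_sub_rev]

lemma ofReal_le_lintegral_Ioo_uj {m : ℕ} (b₀ b₁ : EuclideanSpace ℝ (Fin m)) {σ p : ℝ}
    (hσ₀ : 0 < σ) (hσ₁ : σ < 1) (hp : 0 ≤ p) {j k : ℕ} (hk : k + 2 ≤ j) :
    ENNReal.ofReal
        (‖b₁ - b₀‖ ^ p * (2 * (1 / j : ℝ) ^ (1 - σ) * (1 - 2 ^ (-σ)) / (σ * (1 - σ))))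
      ≤ ∫⁻ x in Ioo (k / j : ℝ) ((k + 1) / j), ∫⁻ y in Ioo (0 : ℝ) 1,
          (‖uj b₀ b₁ j y - uj b₀ b₁ j x‖₊ : ℝ≥0∞) ^ p / (‖y - x‖₊ : ℝ≥0∞) ^ (1 + σ) := by
  have hj : (0 : ℝ) < j := by exact_mod_cast (show 0 < j by omega)
  have hk' : (k : ℝ) + 2 ≤ j := by exact_mod_cast hk
  set a : ℝ := k / j
  set h : ℝ := 1 / j
  have e₁ : ((k : ℝ) + 1) / j = a + h := by ring
  have e₂ : ((k : ℝ) + 2) / j = a + 2 * h := by ring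
  have hsub : Ioo (a + h) (a + 2 * h) ⊆ Ioo 0 1 := by
    rw [← e₁, ← e₂]
    exact Ioo_subset_Ioo (by positivity) ((div_le_one hj).2 hk')
  have hintegrand : ∀ x ∈ Ioo a (a + h), ∀ y ∈ Ioo (a + h) (a + 2 * h),
      (‖uj b₀ b₁ j y - uj b₀ b₁ j x‖₊ : ℝ≥0∞) ^ p / (‖y - x‖₊ : ℝ≥0∞) ^ (1 + σ) =
        ENNReal.ofReal (‖b₁ - b₀‖ ^ p) * ENNReal.ofReal ((y - x) ^ (-(1 + σ))) := by
    intro x hx y hy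
    rw [← e₁] at hx
    rw [← e₁, ← e₂] at hy
    have hfx : ⌊(j : ℝ) * x⌋ = k := floor_mul_eq_of_mem_Ico hj (by
      push_cast
      exact Ioo_subset_Ico_self hx)
    have hfy : ⌊(j : ℝ) * y⌋ = k + 1 := floor_mul_eq_of_mem_Ico hj (by
      push_cast
      rw [add_assoc, one_add_one_eq_two]
      exact Ioo_subset_Ico_self hy)
    rw [enorm_rpow_div_enorm_sub_rpow _ hp _ (hx.2.trans hy.1),
      norm_uj_sub_uj_of_floor_succ b₀ b₁ hfx hfy]
  calc ENNReal.ofReal (‖b₁ - b₀‖ ^ p * (2 * h ^ (1 - σ) * (1 - 2 ^ (-σ)) / (σ * (1 - σ))))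
      = ENNReal.ofReal (‖b₁ - b₀‖ ^ p) * ∫⁻ x in Ioo a (a + h),
          ∫⁻ y in Ioo (a + h) (a + 2 * h), ENNReal.ofReal ((y - x) ^ (-(1 + σ))) := by
        rw [lintegral_Ioo_lintegral_Ioo_adjacent hσ₀ hσ₁ a (by positivity),
          ENNReal.ofReal_mul (by positivity)]
    _ = ∫⁻ x in Ioo a (a + h), ∫⁻ y in Ioo (a + h) (a + 2 * h),
          (‖uj b₀ b₁ j y - uj b₀ b₁ j x‖₊ : ℝ≥0∞) ^ p / (‖y - x‖₊ : ℝ≥0∞) ^ (1 + σ) := by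
        rw [← lintegral_const_mul' _ _ ENNReal.ofReal_ne_top]
        refine setLIntegral_congr_fun measurableSet_Ioo fun x hx => ?_
        rw [← lintegral_const_mul' _ _ ENNReal.ofReal_ne_top]
        exact setLIntegral_congr_fun measurableSet_Ioo fun y hy =>
          (hintegrand x hx y hy).symm
    _ ≤ _ := by
        rw [e₁]
        exact lintegral_mono fun x => lintegral_mono_set hsub

lemma sum_setLIntegral_Ioo_div_le {n j : ℕ} (hn : n ≤ j) (f : ℝ → ℝ≥0∞) :
    ∑ k ∈ Finset.range n, ∫⁻ x in Ioo (k / j : ℝ) ((k + 1) / j), f x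
      ≤ ∫⁻ x in Ioo (0 : ℝ) 1, f x := by
  have hmono : Monotone fun k : ℕ => (k / j : ℝ) := fun a b hab =>
    div_le_div_of_nonneg_right (Nat.cast_le.2 hab) j.cast_nonneg
  have hdisj : Pairwise (Function.onFun Disjoint fun k : ℕ => Ioo (k / j : ℝ) ((k + 1) / j)) := by
    simpa using hmono.pairwise_disjoint_on_Ioo_succ
  rw [← lintegral_biUnion_finset (hdisj.set_pairwise _) fun _ _ => measurableSet_Ioo]
  refine lintegral_mono_set (iUnion₂_subset fun k hk => Ioo_subset_Ioo (by positivity) ?_)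
  have hk : (k : ℝ) + 1 ≤ j := by exact_mod_cast Finset.mem_range.1 hk |>.trans_le hn
  exact div_le_one_of_le₀ hk (Nat.cast_nonneg _)

theorem stmt_10_general (m : ℕ) (s p : ℝ) (hs : 0 < s) (hp : 1 ≤ p) (hsp : s * p < 1)
    (b₀ b₁ : EuclideanSpace ℝ (Fin m)) (j : ℕ) (hj : 1 ≤ j) :
    ENNReal.ofReal (2 * (1 - 1 / (j : ℝ)) * (j : ℝ) ^ (s * p) * (1 - (2 : ℝ) ^ (-(s * p)))
        * ‖b₁ - b₀‖ ^ p / (s * p * (1 - s * p)))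
      ≤ ∫⁻ x in Set.Ioo (0 : ℝ) 1, ∫⁻ y in Set.Ioo (0 : ℝ) 1,
          (‖uj b₀ b₁ j y - uj b₀ b₁ j x‖₊ : ℝ≥0∞) ^ p / (‖y - x‖₊ : ℝ≥0∞) ^ (1 + s * p) := by
  have hσ : 0 < s * p := mul_pos hs (by linarith)
  have hJ : (0 : ℝ) < j := by exact_mod_cast hj
  have hcount :
      ((j - 1 : ℕ) : ℝ) * (1 / j : ℝ) ^ (1 - s * p) = (1 - 1 / j) * (j : ℝ) ^ (s * p) := by
    rw [Nat.cast_sub hj, one_div, Real.inv_rpow hJ.le, ← Real.rpow_neg hJ.le, neg_sub,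
      Real.rpow_sub hJ, Real.rpow_one, Nat.cast_one]
    field_simp
  calc _ = ∑ _k ∈ Finset.range (j - 1), ENNReal.ofReal (‖b₁ - b₀‖ ^ p *
        (2 * (1 / j : ℝ) ^ (1 - s * p) * (1 - 2 ^ (-(s * p))) / (s * p * (1 - s * p)))) := by
        rw [Finset.sum_const, Finset.card_range, nsmul_eq_mul, ← ENNReal.ofReal_natCast,
          ← ENNReal.ofReal_mul (Nat.cast_nonneg _)]
        congr 1
        linear_combination (-2 * (1 - (2 : ℝ) ^ (-(s * p))) * ‖b₁ - b₀‖ ^ p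
          / (s * p * (1 - s * p))) * hcount
    _ ≤ _ := Finset.sum_le_sum fun k hk =>
        ofReal_le_lintegral_Ioo_uj b₀ b₁ hσ hsp (by linarith)
          (by have := Finset.mem_range.1 hk; omega)
    _ ≤ _ := sum_setLIntegral_Ioo_div_le (Nat.sub_le j 1) _

/-- lower bound on the Gagliardo seminorm of the oscillating step functions
when `sp < 1`. -/
theorem stmt_10 (m : ℕ) (s p : ℝ) (hs : 0 < s) (hs1 : s < 1) (hp : 1 ≤ p) (hsp : s * p < 1)
    (b₀ b₁ : EuclideanSpace ℝ (Fin m)) (j : ℕ) (hj : 1 ≤ j) :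
    ENNReal.ofReal (2 * (1 - 1 / (j : ℝ)) * (j : ℝ) ^ (s * p) * (1 - (2 : ℝ) ^ (-(s * p)))
        * ‖b₁ - b₀‖ ^ p / (s * p * (1 - s * p)))
      ≤ ∫⁻ x in Set.Ioo (0 : ℝ) 1, ∫⁻ y in Set.Ioo (0 : ℝ) 1,
          (‖uj b₀ b₁ j y - uj b₀ b₁ j x‖₊ : ℝ≥0∞) ^ p / (‖y - x‖₊ : ℝ≥0∞) ^ (1 + s * p) :=
  stmt_10_general m s p hs hp hsp b₀ b₁ j hj
end
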